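/- arXiv:math/0701619 — 2 statements merged into one kernel-verified Lean document; each statement's English description precedes it below -/
import Mathlib

section
/- The group SL(2,ℝ) cannot be written as a countable union of left translates of a fixed solvable subgroup. -/
/-!
If countably many left cosets of `S` cover `SL(2,ℝ)`, two of the uncountably many upper
unitriangular matrices `[[1, t], [0, 1]]` lie in the same coset, so `S` contains one with `t ≠ 0`,
and then (taking powers) one with `|t| ≥ 2`; likewise for the lower unitriangular matrices.
By Sanov's ping-pong argument on the cones `|x| > |y|` and `|y| > |x|` of `ℝ²`, two such
matrices generate a free group of rank two, which is not solvable since it surjects onto `S₅`.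
-/

open Function Set
open scoped Pointwise

section CountableCosets

variable {G : Type*} [Group G] {S : Subgroup G}

theorem countable_quotient_of_iUnion_mul_eq_univ {g : ℕ → G}
    (h : ⋃ n, (fun x => g n * x) '' (S : Set G) = univ) : Countable (G ⧸ S) := by
  refine Surjective.countable (f := fun n : ℕ => (g n : G ⧸ S)) fun q => ?_
  induction q using QuotientGroup.induction_on with
  | H x =>
    obtain ⟨n, y, hy, rfl⟩ := mem_iUnion.1 (h.symm ▸ mem_univ x)
    exact ⟨n, QuotientGroup.eq.2 (by simpa using hy)⟩

theorem exists_ne_inv_mul_mem_of_countable_quotient [Countable (G ⧸ S)] {α : Type*}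
    [Uncountable α] (w : α → G) : ∃ a b, a ≠ b ∧ (w a)⁻¹ * w b ∈ S := by
  have : ¬ Injective fun a => (w a : G ⧸ S) := fun hinj => not_countable hinj.countable
  simp only [Injective, not_forall] at this
  obtain ⟨a, b, hab, hne⟩ := this
  exact ⟨a, b, hne, QuotientGroup.eq.1 hab⟩

end CountableCosets

theorem FreeGroup.not_isSolvable (α : Type*) [Nontrivial α] :
    ¬ Group.IsSolvable (FreeGroup α) := by
  classical
  obtain ⟨x, y, hxy⟩ := exists_pair_ne α
  let χ : FreeGroup α →* Equiv.Perm (Fin 5) := FreeGroup.lift fun a =>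
    if a = x then finRotate 5 else if a = y then Equiv.swap 0 (finRotate 5 0) else 1
  have hχ : Surjective χ := by
    rw [← MonoidHom.range_eq_top, eq_top_iff, ← Equiv.Perm.closure_cycle_adjacent_swap
      (isCycle_finRotate_of_le (by norm_num)) (support_finRotate_of_le (by norm_num)) 0,
      Subgroup.closure_le, insert_subset_iff, singleton_subset_iff]
    exact ⟨⟨FreeGroup.of x, by simp [χ]⟩, ⟨FreeGroup.of y, by simp [χ, hxy.symm]⟩⟩
  intro h
  exact Equiv.Perm.not_isSolvable_fin_5 (Group.isSolvable_of_surjective hχ)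

theorem Subgroup.not_isSolvable_of_injective_lift {G α : Type*} [Group G] [Nontrivial α]
    {S : Subgroup G} {x : α → G} (hxS : ∀ a, x a ∈ S) (hx : Injective (FreeGroup.lift x)) :
    ¬ Group.IsSolvable S := by
  let φ : FreeGroup α →* S := FreeGroup.lift fun a => ⟨x a, hxS a⟩
  have hφ : S.subtype.comp φ = FreeGroup.lift x := by ext; simp [φ]
  have hφinj : Injective φ := .of_comp (f := S.subtype) (by rwa [← MonoidHom.coe_comp, hφ])
  intro h
  exact FreeGroup.not_isSolvable α (Group.isSolvable_of_isSolvable_injective hφinj)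

def coordDominant {ι F : Type*} [Lattice F] [AddGroup F] (i : ι) : Set (ι → F) :=
  {v | ∀ k ≠ i, |v k| < |v i|}

theorem single_mem_coordDominant {ι F : Type*} [DecidableEq ι] [Ring F] [LinearOrder F]
    [IsStrictOrderedRing F] (i : ι) : (Pi.single i 1 : ι → F) ∈ coordDominant i := by
  intro k hki
  simp [hki]

theorem disjoint_coordDominant {ι F : Type*} [Lattice F] [AddGroup F] {i j : ι} (hij : i ≠ j) :
    Disjoint (coordDominant i : Set (ι → F)) (coordDominant j) :=
  disjoint_left.2 fun _ hi hj => (hi j hij.symm).asymm (hj i hij)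

namespace Matrix.SpecialLinearGroup

variable {ι F : Type*} [DecidableEq ι] [Fintype ι] {i j : ι}

theorem transvection_zpow [CommRing F] (hij : i ≠ j) (b : F) (n : ℤ) :
    transvection hij b ^ n = transvection hij (n * b) := by
  let φ : Multiplicative F →* SpecialLinearGroup ι F :=
    { toFun := fun b => transvection hij b.toAdd
      map_one' := transvection_coeff_zero hij
      map_mul' := fun _ _ => transvection_add hij _ _ }
  simpa [φ, zsmul_eq_mul] using (map_zpow φ (.ofAdd b) n).symm

theorem transvection_smul [CommRing F] (hij : i ≠ j) (b : F) (v : ι → F) :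
    transvection hij b • v = update v i (v i + b * v j) := by
  ext k
  rw [SpecialLinearGroup.smul_def, transvection_coe, add_smul, one_smul, smul_eq_mulVec,
    single_mulVec]
  rcases eq_or_ne k i with rfl | hk <;> simp [*]

section PingPong

variable [CommRing F] [LinearOrder F] [IsStrictOrderedRing F]

theorem transvection_smul_mem_coordDominant (hij : i ≠ j) {b : F} (hb : 2 ≤ |b|) {v : ι → F}
    (hv : v ∈ coordDominant j) : transvection hij b • v ∈ coordDominant i := by
  have hlt : |v j| < |v i + b * v j| := calc
    |v j| < 2 * |v j| - |v i| := by linarith [hv i hij]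
    _ ≤ |b| * |v j| - |v i| := by gcongr
    _ = |b * v j| - |v i| := by rw [abs_mul]
    _ ≤ |v i + b * v j| := by
      have := abs_sub_abs_le_abs_sub (b * v j) (-v i)
      rwa [abs_neg, sub_neg_eq_add, add_comm] at this
  intro k hki
  rw [transvection_smul, update_self, update_of_ne hki]
  rcases eq_or_ne k j with rfl | hkj
  · exact hlt
  · exact (hv k hkj).trans hlt

theorem zpow_transvection_smul_subset_coordDominant (hij : i ≠ j) {b : F} (hb : 2 ≤ |b|)
    {n : ℤ} (hn : n ≠ 0) :
    transvection hij b ^ n • (coordDominant j : Set (ι → F)) ⊆ coordDominant i := by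
  rintro _ ⟨v, hv, rfl⟩
  rw [transvection_zpow]
  refine transvection_smul_mem_coordDominant hij ?_ hv
  have : (1 : F) ≤ |(n : F)| := by exact_mod_cast Int.one_le_abs hn
  rw [abs_mul]
  nlinarith [abs_nonneg b]

theorem injective_lift_transvection_pair (hij : i ≠ j) {a b : F} (ha : 2 ≤ |a|) (hb : 2 ≤ |b|) :
    Injective (FreeGroup.lift ![transvection hij a, transvection hij.symm b]) := by
  set gen := ![transvection hij a, transvection hij.symm b]
  let f : Fin 2 → FreeGroup Unit →* SpecialLinearGroup ι F :=
    fun k => FreeGroup.lift fun _ => gen k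
  have hlift : FreeGroup.lift gen =
      (Monoid.CoprodI.lift f).comp freeGroupEquivCoprodI.toMonoidHom := by
    ext k; simp [f]
  rw [hlift, MonoidHom.coe_comp]
  refine Injective.comp ?_ (MulEquiv.injective _)
  refine Monoid.CoprodI.lift_injective_of_ping_pong f ?_
    ![(coordDominant i : Set (ι → F)), coordDominant j] ?_ ?_ ?_
  · right
    use 0
    rw [FreeGroup.freeGroupUnitEquivInt.cardinal_eq, Cardinal.mk_denumerable]
    exact Cardinal.natCast_le_aleph0
  · intro k
    fin_cases k
    exacts [⟨_, single_mem_coordDominant i⟩, ⟨_, single_mem_coordDominant j⟩]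
  · intro k l hkl
    fin_cases k <;> fin_cases l
    all_goals first | exact absurd rfl hkl | skip
    exacts [disjoint_coordDominant hij, disjoint_coordDominant hij.symm]
  · intro k l hkl h hh
    obtain ⟨n, rfl⟩ := FreeGroup.freeGroupUnitEquivInt.symm.surjective h
    have hn : n ≠ 0 := by rintro rfl; simp [FreeGroup.freeGroupUnitEquivInt] at hh
    fin_cases k <;> fin_cases l
    all_goals first | exact absurd rfl hkl | skip
    · simpa [f, gen, FreeGroup.freeGroupUnitEquivInt] using
        zpow_transvection_smul_subset_coordDominant hij ha hn
    · simpa [f, gen, FreeGroup.freeGroupUnitEquivInt] using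
        zpow_transvection_smul_subset_coordDominant hij.symm hb hn

end PingPong

theorem exists_le_abs_transvection_mem (S : Subgroup (SpecialLinearGroup ι ℝ))
    [Countable (SpecialLinearGroup ι ℝ ⧸ S)] (hij : i ≠ j) (r : ℝ) :
    ∃ c, r ≤ |c| ∧ transvection hij c ∈ S := by
  obtain ⟨s, t, hst, hmem⟩ :=
    exists_ne_inv_mul_mem_of_countable_quotient (S := S) (transvection hij)
  rw [transvection_inv, ← transvection_add, neg_add_eq_sub] at hmem
  obtain ⟨n, hn⟩ := Archimedean.arch r (abs_pos.2 (sub_ne_zero.2 hst.symm))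
  refine ⟨(n : ℤ) * (t - s), ?_, by rw [← transvection_zpow]; exact S.zpow_mem hmem n⟩
  rwa [abs_mul, Int.cast_natCast, Nat.abs_cast, ← nsmul_eq_mul]

end Matrix.SpecialLinearGroup

open Matrix.SpecialLinearGroup in
/-- The group SL(2,ℝ) cannot be written as a countable union of
left translates of a fixed solvable subgroup: there is no solvable subgroup `S`
and countable family `gₙ` with `SL(2,ℝ) = ⋃ₙ gₙ • S`. -/
theorem sl2_not_countable_union_of_solvable_cosets
    (S : Subgroup (Matrix.SpecialLinearGroup (Fin 2) ℝ)) (hS : IsSolvable S)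
    (g : ℕ → Matrix.SpecialLinearGroup (Fin 2) ℝ) :
    (⋃ n : ℕ, (fun x => g n * x) '' (S : Set (Matrix.SpecialLinearGroup (Fin 2) ℝ)))
      ≠ Set.univ := by
  intro hcov
  have := countable_quotient_of_iUnion_mul_eq_univ hcov
  have hij : (0 : Fin 2) ≠ 1 := zero_ne_one
  obtain ⟨a, ha, haS⟩ := exists_le_abs_transvection_mem S hij 2
  obtain ⟨b, hb, hbS⟩ := exists_le_abs_transvection_mem S hij.symm 2
  refine S.not_isSolvable_of_injective_lift (fun k => ?_)
    (injective_lift_transvection_pair hij ha hb) hS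
  fin_cases k
  exacts [haS, hbS]
end

section
/- Let V be a complete Riemannian manifold and G a group of isometries of V such that the G-orbit of some compact set K equals V. If V is not compact, then V contains a geodesic line, i.e., a geodesic γ : ℝ → V such that d(γ(t), γ(t')) = |t − t'| for all t, t'. -/
/-- `γ : ℝ → V` is a geodesic line: a globally minimizing unit-speed geodesic,
i.e. `d(γ t, γ t') = |t - t'|` for all `t, t'`. -/
def IsGeodesicLine {V : Type*} [MetricSpace V] (γ : ℝ → V) : Prop :=
  ∀ t t' : ℝ, dist (γ t) (γ t') = |t - t'|

/-- Cheeger–Gromoll: let `V` be a complete Riemannian manifold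
(formalized, via Hopf–Rinow, as a proper geodesic metric space: `hgeo` states
that any two points are joined by a minimizing geodesic segment) and `G` a
group of isometries of `V` such that the `G`-orbit of some compact set `K`
equals `V`.  If `V` is not compact, then `V` contains a geodesic line. -/
theorem exists_geodesic_line_of_cocompact
    {V : Type*} [MetricSpace V] [ProperSpace V] [Nonempty V]
    (hgeo : ∀ x y : V, ∃ γ : ℝ → V, γ 0 = x ∧ γ (dist x y) = y ∧
      ∀ s ∈ Set.Icc (0 : ℝ) (dist x y), ∀ t ∈ Set.Icc (0 : ℝ) (dist x y),
        dist (γ s) (γ t) = |s - t|)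
    (G : Subgroup (V ≃ᵢ V)) (K : Set V) (hK : IsCompact K)
    (horbit : (⋃ g ∈ G, (g : V ≃ᵢ V) '' K) = Set.univ)
    (hnc : ¬ CompactSpace V) :
    ∃ γ : ℝ → V, IsGeodesicLine γ := by
  classical
  obtain ⟨x0⟩ := (inferInstance : Nonempty V)
  obtain ⟨R, hR⟩ := hK.isBounded.subset_closedBall x0
  -- V is unbounded
  have hub : ∀ r : ℝ, ∃ y : V, r < dist x0 y := by
    intro r
    by_contra h
    push_neg at h
    refine hnc (isCompact_univ_iff.1 ((isCompact_closedBall x0 r).of_isClosed_subset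
      isClosed_univ (fun z _ => ?_)))
    rw [Metric.mem_closedBall, dist_comm]
    exact h z
  choose y hy using fun n : ℕ => hub (2 * n)
  choose σ hσ0 hσend hσd using fun n => hgeo x0 (y n)
  set L : ℕ → ℝ := fun n => dist x0 (y n) with hLdef
  set m : ℕ → V := fun n => σ n (L n / 2) with hmdef
  have hm : ∀ n, ∃ g, g ∈ G ∧ ∃ x ∈ K, (g : V ≃ᵢ V) x = m n := by
    intro n
    have : m n ∈ (⋃ g ∈ G, (g : V ≃ᵢ V) '' K) := horbit ▸ Set.mem_univ _
    simpa [Set.mem_iUnion] using this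
  choose g hgG k hkK hgk using hm
  set Γ : ℕ → ℝ → V := fun n t => (g n : V ≃ᵢ V).symm (σ n (L n / 2 + t)) with hΓdef
  have hLn : ∀ n : ℕ, 2 * (n : ℝ) < L n := hy
  have hmem : ∀ n : ℕ, ∀ t : ℝ, |t| ≤ (n : ℝ) → L n / 2 + t ∈ Set.Icc (0 : ℝ) (L n) := by
    intro n t ht
    have h1 := (abs_le.1 ht).1
    have h2 := (abs_le.1 ht).2
    have h3 := hLn n
    constructor <;> [nlinarith; nlinarith]
  have hdist : ∀ n : ℕ, ∀ t t' : ℝ, |t| ≤ (n : ℝ) → |t'| ≤ (n : ℝ) →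
      dist (Γ n t) (Γ n t') = |t - t'| := by
    intro n t t' ht ht'
    have h := hσd n _ (hmem n t ht) _ (hmem n t' ht')
    simpa [hΓdef, (g n : V ≃ᵢ V).symm.isometry.dist_eq, add_sub_add_left_eq_sub] using h
  have hΓ0 : ∀ n, Γ n 0 ∈ K := by
    intro n
    have h1 : Γ n 0 = (g n : V ≃ᵢ V).symm (m n) := by simp [hΓdef, hmdef]
    have h2 : (g n : V ≃ᵢ V).symm (m n) = k n := by
      rw [← hgk n]; exact (g n : V ≃ᵢ V).symm_apply_apply _
    rw [h1, h2]; exact hkK n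
  -- a nonprincipal ultrafilter on ℕ
  set U : Ultrafilter ℕ := Ultrafilter.of Filter.atTop with hU
  have hUle : (U : Filter ℕ) ≤ Filter.atTop := Ultrafilter.of_le _
  have hev : ∀ t : ℝ, ∀ᶠ n : ℕ in Filter.atTop, |t| ≤ (n : ℝ) := fun t =>
    tendsto_natCast_atTop_atTop.eventually_ge_atTop |t|
  have hconv : ∀ t : ℝ, ∃ a, Filter.Tendsto (fun n => Γ n t) U (nhds a) := by
    intro t
    have hmemU : (fun n => Γ n t) ⁻¹' Metric.closedBall x0 (R + |t|) ∈ U := by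
      refine hUle ((hev t).mono fun n hn => ?_)
      have h0 : dist (Γ n 0) (Γ n t) = |0 - t| :=
        hdist n 0 t (by simp) hn
      have hK0 : dist (Γ n 0) x0 ≤ R := by
        have := hR (hΓ0 n)
        rwa [Metric.mem_closedBall] at this
      have : dist (Γ n t) x0 ≤ dist (Γ n t) (Γ n 0) + dist (Γ n 0) x0 := dist_triangle _ _ _
      refine Metric.mem_closedBall.2 ?_
      rw [dist_comm] at h0
      simp only [zero_sub, abs_neg] at h0
      calc dist (Γ n t) x0 ≤ dist (Γ n t) (Γ n 0) + dist (Γ n 0) x0 := dist_triangle _ _ _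
        _ ≤ |t| + R := by rw [h0]; linarith
        _ = R + |t| := by ring
    obtain ⟨a, -, ha⟩ := (isCompact_closedBall x0 (R + |t|)).ultrafilter_le_nhds
      (U.map (fun n => Γ n t)) (Filter.le_principal_iff.2 (Ultrafilter.mem_map.2 hmemU))
    exact ⟨a, by rwa [Filter.Tendsto, ← Ultrafilter.coe_map]⟩
  choose γ hγ using hconv
  refine ⟨γ, fun t t' => ?_⟩
  have h1 : Filter.Tendsto (fun n => dist (Γ n t) (Γ n t')) U
      (nhds (dist (γ t) (γ t'))) := (hγ t).dist (hγ t')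
  have h2 : ∀ᶠ n : ℕ in (U : Filter ℕ), dist (Γ n t) (Γ n t') = |t - t'| :=
    hUle (((hev t).and (hev t')).mono fun n hn => hdist n t t' hn.1 hn.2)
  exact tendsto_nhds_unique (h1.congr' h2) tendsto_const_nhds
end
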